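/- Let Γ be a tetravalent G-half-arc-transitive graph for some G ≤ Aut(Γ), let C be a G-alternating cycle, let u be a vertex of C, and let s and B_s(C;u) be as defined. Then B_s(C;u) is a block of imprimitivity for the action of G on the vertex set of Γ. -/

import Mathlib

/-! Common definitions for tetravalent half-arc-transitive graph theory. -/

open SimpleGraph Set

namespace HalfArc

variable {V W : Type*}

/-- A subgroup of automorphisms acts transitively on the vertices. -/
def IsVertexTrans (Γ : SimpleGraph V) (G : Subgroup (Γ ≃g Γ)) : Prop :=
  ∀ u v : V, ∃ g ∈ G, g u = v

/-- A subgroup of automorphisms acts transitively on the edges. -/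
def IsEdgeTrans (Γ : SimpleGraph V) (G : Subgroup (Γ ≃g Γ)) : Prop :=
  ∀ ⦃u v u' v' : V⦄, Γ.Adj u v → Γ.Adj u' v' →
    ∃ g ∈ G, (g u = u' ∧ g v = v') ∨ (g u = v' ∧ g v = u')

/-- A subgroup of automorphisms acts transitively on the arcs (ordered pairs of
adjacent vertices). -/
def IsArcTrans (Γ : SimpleGraph V) (G : Subgroup (Γ ≃g Γ)) : Prop :=
  ∀ ⦃u v u' v' : V⦄, Γ.Adj u v → Γ.Adj u' v' → ∃ g ∈ G, g u = u' ∧ g v = v'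

/-- Half-arc-transitive: vertex- and edge- but not arc-transitive. -/
def IsHalfArcTrans (Γ : SimpleGraph V) (G : Subgroup (Γ ≃g Γ)) : Prop :=
  IsVertexTrans Γ G ∧ IsEdgeTrans Γ G ∧ ¬ IsArcTrans Γ G

/-- An alternating cycle of length `n` in a graph `Γ` whose edges carry an
orientation `O`: a cyclic sequence of pairwise distinct vertices in which
consecutive vertices are adjacent and any two consecutive edges have opposite
orientations. -/
structure AltCycle (Γ : SimpleGraph V) (O : V → V → Prop) (n : ℕ) where
  f : ZMod n → V
  inj : Function.Injective f
  adj : ∀ i, Γ.Adj (f i) (f (i + 1))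
  alt : ∀ i, O (f i) (f (i + 1)) ↔ O (f (i + 2)) (f (i + 1))

/-- The vertex set of an alternating cycle. -/
def cycVerts {Γ : SimpleGraph V} {O : V → V → Prop} {n : ℕ} (c : AltCycle Γ O n) : Set V :=
  Set.range c.f

/-- The edge set of an alternating cycle. -/
def cycEdges {Γ : SimpleGraph V} {O : V → V → Prop} {n : ℕ} (c : AltCycle Γ O n) :
    Set (Sym2 V) :=
  Set.range fun i => s(c.f i, c.f (i + 1))

/-- The sets of edges of alternating cycles (an alternating cycle, as a subgraph,
is determined by its edge set). -/
def IsAltEdgeSet (Γ : SimpleGraph V) (O : V → V → Prop) (n : ℕ) (E : Set (Sym2 V)) : Prop :=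
  ∃ c : AltCycle Γ O n, cycEdges c = E

/-- The vertex sets of alternating cycles. -/
def IsAltVertSet (Γ : SimpleGraph V) (O : V → V → Prop) (n : ℕ) (A : Set V) : Prop :=
  ∃ c : AltCycle Γ O n, cycVerts c = A

/-- The set of vertices covered by a set of edges. -/
def suppOf (E : Set (Sym2 V)) : Set V := {v | ∃ e ∈ E, v ∈ e}

/-- The graph of alternating cycles: its vertices are the alternating cycles
(represented by their edge sets), two of them adjacent whenever they share a vertex. -/
def altGraph (Γ : SimpleGraph V) (O : V → V → Prop) (n : ℕ) :
    SimpleGraph {E : Set (Sym2 V) // IsAltEdgeSet Γ O n E} where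
  Adj X Y := X ≠ Y ∧ (suppOf X.1 ∩ suppOf Y.1).Nonempty
  symm := by
    constructor
    rintro X Y ⟨hne, x, hx1, hx2⟩
    exact ⟨hne.symm, x, hx2, hx1⟩
  loopless := by constructor; rintro X ⟨hne, -⟩; exact hne rfl

/-- The attachment sets: nonempty intersections of (the vertex sets of) two distinct
alternating cycles. -/
def IsAttSet (Γ : SimpleGraph V) (O : V → V → Prop) (n : ℕ) (A : Set V) : Prop :=
  ∃ c c' : AltCycle Γ O n, cycEdges c ≠ cycEdges c' ∧ (cycVerts c ∩ cycVerts c').Nonempty ∧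
    A = cycVerts c ∩ cycVerts c'

/-- `attachmentIs Γ O n a` : any two distinct alternating cycles with nonempty
intersection meet in exactly `a` vertices. -/
def attachmentIs (Γ : SimpleGraph V) (O : V → V → Prop) (n a : ℕ) : Prop :=
  ∀ A : Set V, IsAttSet Γ O n A → A.ncard = a

/-- A `k`-step rotation of an alternating cycle (in one of the two directions). -/
def IsRot {Γ : SimpleGraph V} {O : V → V → Prop} {n : ℕ} (c : AltCycle Γ O n)
    (g : V → V) (k : ℕ) : Prop :=
  (∀ i, g (c.f i) = c.f (i + k)) ∨ (∀ i, g (c.f i) = c.f (i - k))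

/-- The setup of the paper: a finite connected tetravalent graph `Γ`, a subgroup `G`
of its automorphism group acting half-arc-transitively, one of the two `G`-induced
orientations `O` of the edges of `Γ` (an orbit of `G` on arcs), the `G`-radius `r`
(half the common length of all `G`-alternating cycles) and the `G`-attachment
number `att`, together with the basic structural facts relating them. -/
structure Setup (V : Type*) where
  Γ : SimpleGraph V
  finite : Finite V
  conn : Γ.Connected
  tetra : ∀ v : V, (Γ.neighborSet v).ncard = 4
  G : Subgroup (Γ ≃g Γ)
  hat : IsHalfArcTrans Γ G
  O : V → V → Prop
  O_adj : ∀ ⦃u v⦄, O u v → Γ.Adj u v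
  O_choice : ∀ ⦃u v⦄, Γ.Adj u v → (O u v ↔ ¬ O v u)
  O_inv : ∀ g ∈ G, ∀ ⦃u v⦄, O u v → O (g u) (g v)
  O_orbit : ∀ ⦃u v u' v'⦄, O u v → O u' v' → ∃ g ∈ G, g u = u' ∧ g v = v'
  r : ℕ
  r_pos : 0 < r
  /-- every vertex lies on exactly two `G`-alternating cycles, each of length `2 * r` -/
  alt_cover : ∀ v : V, {E : Set (Sym2 V) | IsAltEdgeSet Γ O (2 * r) E ∧ v ∈ suppOf E}.ncard = 2
  att : ℕ
  att_pos : 0 < att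
  /-- any two non-disjoint `G`-alternating cycles meet in exactly `att` vertices -/
  att_eq : attachmentIs Γ O (2 * r) att
  att_dvd : att ∣ 2 * r

namespace Setup

variable {V : Type*} (S : Setup V)

/-- The kernel of the action of `G` on the set of `G`-alternating cycles:
the elements of `G` fixing every `G`-alternating cycle setwise. -/
def altKernel : Subgroup (S.Γ ≃g S.Γ) where
  carrier := {g | g ∈ S.G ∧ ∀ E : Set (Sym2 V),
    IsAltEdgeSet S.Γ S.O (2 * S.r) E → Sym2.map (g : V → V) '' E = E}
  one_mem' := by
    refine ⟨S.G.one_mem, fun E _ => ?_⟩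
    have : Sym2.map ((1 : S.Γ ≃g S.Γ) : V → V) = id := by
      funext e
      have : ((1 : S.Γ ≃g S.Γ) : V → V) = id := rfl
      rw [this, Sym2.map_id, id]
    rw [this, Set.image_id]
  mul_mem' := by
    rintro g h ⟨hg, hg'⟩ ⟨hh, hh'⟩
    refine ⟨S.G.mul_mem hg hh, fun E hE => ?_⟩
    have hcomp : Sym2.map ((g * h : S.Γ ≃g S.Γ) : V → V)
        = Sym2.map (g : V → V) ∘ Sym2.map (h : V → V) := by
      funext e
      have : ((g * h : S.Γ ≃g S.Γ) : V → V) = (g : V → V) ∘ (h : V → V) := rfl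
      rw [this, Function.comp_apply, ← Sym2.map_map]
    rw [hcomp, Set.image_comp, hh' E hE, hg' E hE]
  inv_mem' := by
    rintro g ⟨hg, hg'⟩
    refine ⟨S.G.inv_mem hg, fun E hE => ?_⟩
    conv_lhs => rw [← hg' E hE]
    rw [← Set.image_comp]
    have : Sym2.map ((g⁻¹ : S.Γ ≃g S.Γ) : V → V) ∘ Sym2.map (g : V → V) = id := by
      funext e
      rw [Function.comp_apply, Sym2.map_map]
      have h1 : ((g⁻¹ : S.Γ ≃g S.Γ) : V → V) ∘ (g : V → V) = id := by
        funext v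
        exact g.toEquiv.symm_apply_apply v
      rw [h1, Sym2.map_id]
    rw [this, Set.image_id]

/-- The kernel of the action of `G` on a collection of sets of vertices. -/
def kernelOn (P : Set V → Prop) : Subgroup (S.Γ ≃g S.Γ) where
  carrier := {g | g ∈ S.G ∧ ∀ A : Set V, P A → (g : V → V) '' A = A}
  one_mem' := ⟨S.G.one_mem, fun A _ => by
    have : ((1 : S.Γ ≃g S.Γ) : V → V) = id := rfl
    rw [this, Set.image_id]⟩
  mul_mem' := by
    rintro g h ⟨hg, hg'⟩ ⟨hh, hh'⟩
    refine ⟨S.G.mul_mem hg hh, fun A hA => ?_⟩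
    have : ((g * h : S.Γ ≃g S.Γ) : V → V) = (g : V → V) ∘ (h : V → V) := rfl
    rw [this, Set.image_comp, hh' A hA, hg' A hA]
  inv_mem' := by
    rintro g ⟨hg, hg'⟩
    refine ⟨S.G.inv_mem hg, fun A hA => ?_⟩
    conv_lhs => rw [← hg' A hA]
    rw [← Set.image_comp]
    have : ((g⁻¹ : S.Γ ≃g S.Γ) : V → V) ∘ (g : V → V) = id := by
      funext v; exact g.toEquiv.symm_apply_apply v
    rw [this, Set.image_id]

/-- The kernel of the action of `G` on the set of all `G`-attachment sets. -/
def attKernel : Subgroup (S.Γ ≃g S.Γ) :=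
  S.kernelOn (IsAttSet S.Γ S.O (2 * S.r))

/-- The block `B_s(C; u_i) = {u_{i+2sj} : 0 ≤ j < att}` of Construction 5.3. -/
def blockSet (s : ℕ) (c : AltCycle S.Γ S.O (2 * S.r)) (i : ZMod (2 * S.r)) : Set V :=
  {v | ∃ j : ℕ, j < S.att ∧ v = c.f (i + (2 * s * j : ℕ))}

/-- The imprimitivity block system `B` of Construction 5.3. -/
def Blocks (s : ℕ) : Set (Set V) :=
  {A | ∃ (c : AltCycle S.Γ S.O (2 * S.r)) (i : ZMod (2 * S.r)), A = S.blockSet s c i}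

/-- The quotient graph `Γ_B` of `Γ` with respect to the block system `B`. -/
def quotGraph (s : ℕ) : SimpleGraph {A : Set V // A ∈ S.Blocks s} where
  Adj X Y := X ≠ Y ∧ ∃ u ∈ X.1, ∃ v ∈ Y.1, S.Γ.Adj u v
  symm := by
    constructor
    rintro X Y ⟨hne, u, hu, v, hv, ha⟩
    exact ⟨hne.symm, v, hv, u, hu, ha.symm⟩
  loopless := by constructor; rintro X ⟨hne, -⟩; exact hne rfl

/-- The kernel of the action of `G` on the quotient graph `Γ_B`. -/
def quotKernel (s : ℕ) : Subgroup (S.Γ ≃g S.Γ) :=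
  S.kernelOn (· ∈ S.Blocks s)

/-- The orientation of the edges of the quotient graph `Γ_B` induced by `O`. -/
def quotO (s : ℕ) (X Y : {A : Set V // A ∈ S.Blocks s}) : Prop :=
  ∃ u ∈ X.1, ∃ v ∈ Y.1, S.O u v

end Setup

/-- The data defining the parameters `q_t` and `q_h` of Section 3: a vertex `v`,
the two `G`-alternating cycles `c` and `c'` through `v` (with `v = u_0 = v_0` and
`v` the tail of the two arcs of `c` incident to it), and the minimality properties
defining `q_t` and `q_h`.  Here `ell = 2r/att`. -/
structure JumpData {V : Type*} (S : Setup V) where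
  v : V
  c : AltCycle S.Γ S.O (2 * S.r)
  c' : AltCycle S.Γ S.O (2 * S.r)
  ell : ℕ
  hell : S.att * ell = 2 * S.r
  hc : c.f 0 = v
  hc' : c'.f 0 = v
  hne : cycEdges c ≠ cycEdges c'
  htail₁ : S.O v (c.f 1)
  htail₂ : S.O v (c.f (-1))
  qt : ℕ
  qh : ℕ
  hqt : c'.f ((qt * ell : ℕ)) = c.f ((ell : ℕ)) ∨
    c'.f ((qt * ell : ℕ)) = c.f (-(ell : ZMod (2 * S.r)))
  hqt_min : ∀ m : ℕ, m < qt → ¬(c'.f ((m * ell : ℕ)) = c.f ((ell : ℕ)) ∨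
    c'.f ((m * ell : ℕ)) = c.f (-(ell : ZMod (2 * S.r))))
  hqh : c.f ((qh * ell : ℕ)) = c'.f ((ell : ℕ)) ∨
    c.f ((qh * ell : ℕ)) = c'.f (-(ell : ZMod (2 * S.r)))
  hqh_min : ∀ m : ℕ, m < qh → ¬(c.f ((m * ell : ℕ)) = c'.f ((ell : ℕ)) ∨
    c.f ((m * ell : ℕ)) = c'.f (-(ell : ZMod (2 * S.r))))

/-- The `G`-alternating jump `jum_G(Γ) = min {q_t, q_h}`. -/
def JumpData.jump {V : Type*} {S : Setup V} (J : JumpData S) : ℕ := min J.qt J.qh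

end HalfArc


open HalfArc

/-!
Both kinds of sets `B_s(C; u)` are fibres of `G`-equivariant maps on the vertex set, and every
fibre of an equivariant map is a block. For `ℓ` even, `B_s(C; u)` is the attachment set of `u`,
the fibre of `cyclesThru`, which sends a vertex to the two alternating cycles through it. For `ℓ`
odd, it is the half of that attachment set formed by the vertices that, like `u`, are the tails of
their two edges on `C`: since `ℓ` is odd, `u_{i+ℓj}` has the same orientation on `C` as `u_i`
exactly when `j` is even. As every vertex is the tail on exactly one of its two alternating
cycles, this half is the fibre of `w ↦ (cyclesThru w, tailCycles w)`.

The core is locating an attachment set along `C`. Alternating cycles are edge-disjoint, so an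
element of `G` taking an arc of `C` to an arc of `C` preserves `C`; this yields a rotation of `C`
by two steps and a reflection of `C`. The relation "same attachment set" on the positions
`ZMod (2r)` is therefore invariant under `x ↦ x + 2` and `x ↦ -x`, which makes the attachment set
of `u_i` a coset `i + H` of a subgroup `H` of order `a`, that is, `{u_{i+ℓj}}`.
-/

open Function

section Fibers

variable {V X : Type*}

theorem image_fiber {f : V → X} {g : V → V} (hg : Surjective g) {σ : X → X}
    (hσ : Injective σ) (hf : ∀ w, f (g w) = σ (f w)) (v : V) :
    g '' {w | f w = f v} = {w | f w = f (g v)} := by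
  ext x
  constructor
  · rintro ⟨w, hw, rfl⟩
    exact (hf w).trans ((congrArg σ hw).trans (hf v).symm)
  · intro hx
    obtain ⟨w, rfl⟩ := hg x
    exact ⟨w, hσ (by rwa [← hf, ← hf]), rfl⟩

theorem fiber_eq_or_disjoint (f : V → X) (u v : V) :
    {w | f w = f u} = {w | f w = f v} ∨ Disjoint {w | f w = f u} {w | f w = f v} := by
  by_cases h : f u = f v
  · exact Or.inl (by rw [h])
  · exact Or.inr (disjoint_left.2 fun w hu hv => h (hu.symm.trans hv))

theorem image_fiber_eq_or_disjoint {f : V → X} {g : V → V} (hg : Surjective g) {σ : X → X}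
    (hσ : Injective σ) (hf : ∀ w, f (g w) = σ (f w)) (v : V) :
    g '' {w | f w = f v} = {w | f w = f v} ∨ Disjoint (g '' {w | f w = f v}) {w | f w = f v} := by
  rw [image_fiber hg hσ hf]
  exact fiber_eq_or_disjoint f (g v) v

end Fibers

namespace ZMod

variable {n : ℕ} [NeZero n] {X : Type*} {ψ : ZMod n → X}

theorem even_or_odd (x : ZMod n) : Even x ∨ Odd x := by
  rw [← natCast_zmod_val x]
  exact (Nat.even_or_odd x.val).imp Even.natCast Odd.natCast

theorem mem_zmultiples_natCast_iff {l : ℕ} {x : ZMod n} :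
    x ∈ AddSubgroup.zmultiples (l : ZMod n) ↔ ∃ j : ℕ, x = ((l * j : ℕ) : ZMod n) := by
  constructor
  · rintro ⟨k, rfl⟩
    refine ⟨(k : ZMod n).val, ?_⟩
    simp only [zsmul_eq_mul, Nat.cast_mul, natCast_zmod_val, mul_comm]
  · rintro ⟨j, rfl⟩
    exact ⟨j, by simp [mul_comm]⟩

theorem addSubgroup_eq_zmultiples {a l : ℕ} (hal : a * l = n) {H : AddSubgroup (ZMod n)}
    (hH : Nat.card H = a) : H = AddSubgroup.zmultiples (l : ZMod n) := by
  have ha : 0 < a := Nat.pos_of_ne_zero (by rintro rfl; exact NeZero.ne n (by simp [← hal]))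
  have hl : 0 < l := Nat.pos_of_ne_zero (by rintro rfl; exact NeZero.ne n (by simp [← hal]))
  have hle : H ≤ AddSubgroup.zmultiples (l : ZMod n) := by
    intro x hx
    have hax : ((a * x.val : ℕ) : ZMod n) = 0 := by
      have := addOrderOf_dvd_iff_nsmul_eq_zero.1 (hH ▸ AddSubgroup.addOrderOf_dvd_natCard H hx)
      rwa [nsmul_eq_mul, ← natCast_zmod_val x, ← Nat.cast_mul] at this
    obtain ⟨j, hj⟩ : l ∣ x.val := by
      have : a * l ∣ a * x.val := hal ▸ (natCast_eq_zero_iff _ n).1 hax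
      exact Nat.dvd_of_mul_dvd_mul_left ha this
    exact mem_zmultiples_natCast_iff.2 ⟨j, by rw [← hj, natCast_zmod_val]⟩
  refine AddSubgroup.eq_of_le_of_card_ge hle ?_
  rw [Nat.card_zmultiples, addOrderOf_coe l (NeZero.ne n), hH, ← hal,
    Nat.gcd_eq_right (dvd_mul_left l a), Nat.mul_div_cancel a hl]

theorem add_even_eq_iff (htrans : ∀ x y, ψ (x + 2) = ψ (y + 2) ↔ ψ x = ψ y)
    {t : ZMod n} (ht : Even t) (x y : ZMod n) :
    ψ (x + t) = ψ (y + t) ↔ ψ x = ψ y := by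
  obtain ⟨k, rfl⟩ := ht
  rw [← natCast_zmod_val k, ← two_mul]
  induction k.val generalizing x y with
  | zero => simp
  | succ m ih => rw [Nat.cast_succ, mul_add_one, ← add_assoc, ← add_assoc, htrans, ih]

theorem even_sub_eq_iff (htrans : ∀ x y, ψ (x + 2) = ψ (y + 2) ↔ ψ x = ψ y)
    (hneg : ∀ x y, ψ (-x) = ψ (-y) ↔ ψ x = ψ y) {t : ZMod n} (ht : Even t) (x y : ZMod n) :
    ψ (t - x) = ψ (t - y) ↔ ψ x = ψ y := by
  rw [sub_eq_neg_add, sub_eq_neg_add, add_even_eq_iff htrans ht, hneg]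

theorem add_mem_fiber_of_even (htrans : ∀ x y, ψ (x + 2) = ψ (y + 2) ↔ ψ x = ψ y)
    {i x y t : ZMod n} (ht : Even t) (hx : ψ (i + x) = ψ i) (hy : ψ (i + y) = ψ i)
    (hyt : ψ (i + (y + t)) = ψ i) : ψ (i + (x + t)) = ψ i := by
  rw [← hyt, ← add_assoc, ← add_assoc, add_even_eq_iff htrans ht, hx, hy]

theorem neg_mem_fiber (htrans : ∀ x y, ψ (x + 2) = ψ (y + 2) ↔ ψ x = ψ y)
    (hneg : ∀ x y, ψ (-x) = ψ (-y) ↔ ψ x = ψ y) {i x : ZMod n} (hx : ψ (i + x) = ψ i) :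
    ψ (i + -x) = ψ i := by
  have := even_sub_eq_iff htrans hneg ⟨i, rfl⟩ (i + x) i
  rwa [show i + i - (i + x) = i + -x by ring, add_sub_cancel_right, iff_true_right hx] at this

def fiberAddSubgroup (htrans : ∀ x y, ψ (x + 2) = ψ (y + 2) ↔ ψ x = ψ y)
    (hneg : ∀ x y, ψ (-x) = ψ (-y) ↔ ψ x = ψ y) (i : ZMod n) : AddSubgroup (ZMod n) where
  carrier := {x | ψ (i + x) = ψ i}
  zero_mem' := by rw [mem_ofPred_eq, add_zero]
  neg_mem' := neg_mem_fiber htrans hneg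
  add_mem' {x y} hx hy := by
    have h0 : ψ (i + 0) = ψ i := by rw [add_zero]
    rcases even_or_odd y with hy' | hy'
    · exact add_mem_fiber_of_even htrans hy' hx h0 (by rwa [zero_add])
    rcases even_or_odd x with hx' | hx'
    · rw [mem_ofPred_eq, add_comm x]
      exact add_mem_fiber_of_even htrans hx' hy h0 (by rwa [zero_add])
    -- translation by the even element `x + y` maps `-y` to `x`, hence `0` to `x + y`
    · have := add_mem_fiber_of_even htrans (hx'.add_odd hy') h0 (neg_mem_fiber htrans hneg hy)
        (by rwa [show -y + (x + y) = x by ring])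
      rwa [zero_add] at this

theorem eq_iff_sub_mem_zmultiples (htrans : ∀ x y, ψ (x + 2) = ψ (y + 2) ↔ ψ x = ψ y)
    (hneg : ∀ x y, ψ (-x) = ψ (-y) ↔ ψ x = ψ y) {a l : ℕ} (hal : a * l = n) {i : ZMod n}
    (hcard : {q | ψ q = ψ i}.ncard = a) (q : ZMod n) :
    ψ q = ψ i ↔ q - i ∈ AddSubgroup.zmultiples (l : ZMod n) := by
  set H := fiberAddSubgroup htrans hneg i
  have hfiber : {q | ψ q = ψ i} = (i + ·) '' (H : Set (ZMod n)) := by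
    ext q
    refine ⟨fun h => ⟨q - i, ?_, add_sub_cancel i q⟩, by rintro ⟨x, hx, rfl⟩; exact hx⟩
    change ψ (i + (q - i)) = ψ i
    rwa [add_sub_cancel]
  have hH : Nat.card H = a := by
    rw [← hcard, hfiber, ncard_image_of_injective _ (add_right_injective i)]
    exact Nat.card_coe_set_eq _
  rw [← addSubgroup_eq_zmultiples hal hH]
  change _ ↔ ψ (i + (q - i)) = ψ i
  rw [add_sub_cancel]

end ZMod

namespace HalfArc

namespace AltCycle

variable {V : Type*} {Γ : SimpleGraph V} {O : V → V → Prop} {n : ℕ} (c : AltCycle Γ O n)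

theorem suppOf_cycEdges : suppOf (cycEdges c) = cycVerts c := by
  ext x
  constructor
  · rintro ⟨_, ⟨i, rfl⟩, hx⟩
    rcases Sym2.mem_iff.1 hx with rfl | rfl
    exacts [⟨i, rfl⟩, ⟨i + 1, rfl⟩]
  · rintro ⟨i, rfl⟩
    exact ⟨_, ⟨i, rfl⟩, Sym2.mem_mk_left _ _⟩

theorem mem_suppOf_cycEdges (i : ZMod n) : c.f i ∈ suppOf (cycEdges c) := by
  rw [suppOf_cycEdges]
  exact ⟨i, rfl⟩

theorem eq_add_one_or_eq_sub_one {t : ZMod n} {x : V} (h : s(c.f t, x) ∈ cycEdges c) :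
    x = c.f (t + 1) ∨ x = c.f (t - 1) := by
  obtain ⟨i, hi⟩ := h
  rcases Sym2.eq_iff.1 hi with ⟨h1, rfl⟩ | ⟨rfl, h2⟩
  · rw [c.inj h1]
    exact Or.inl rfl
  · rw [← c.inj h2, add_sub_cancel_right]
    exact Or.inr rfl

theorem apply_eq_of_cycEdges_subset [NeZero n] {d : AltCycle Γ O n}
    (hdc : cycEdges d ⊆ cycEdges c) {k ε : ZMod n} (hε : ε = 1 ∨ ε = -1)
    (h0 : d.f 0 = c.f k) (h1 : d.f 1 = c.f (k + ε)) (j : ZMod n) :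
    d.f j = c.f (k + ε * j) := by
  have step (m p : ZMod n) (hm : d.f m = c.f p) (hm1 : d.f (m + 1) = c.f (p + ε)) :
      d.f (m + 1 + 1) = c.f (p + ε + ε) := by
    have hnext : d.f (m + 1 + 1) = c.f (p + ε + 1) ∨ d.f (m + 1 + 1) = c.f (p + ε - 1) :=
      c.eq_add_one_or_eq_sub_one (by rw [← hm1]; exact hdc ⟨m + 1, rfl⟩)
    -- stepping back along `c` revisits `d.f m`, which is only possible when `2 = 0`
    have hback (h : d.f (m + 1 + 1) = c.f p) : (2 : ZMod n) = 0 := by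
      linear_combination d.inj (h.trans hm.symm)
    rcases hε with rfl | rfl <;> rcases hnext with h | h
    · exact h
    · rw [add_sub_cancel_right] at h
      rw [h]
      congr 1
      linear_combination -hback h
    · rw [neg_add_cancel_right] at h
      rw [h]
      congr 1
      linear_combination hback h
    · rw [h, sub_eq_add_neg]
  have key (m : ℕ) : d.f m = c.f (k + ε * m) ∧ d.f (m + 1) = c.f (k + ε * m + ε) := by
    induction m with
    | zero => simpa using ⟨h0, h1⟩
    | succ m ih =>
      push_cast
      refine ⟨by rw [ih.2]; ring_nf, by rw [step _ _ ih.1 ih.2]; ring_nf⟩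
  rw [← ZMod.natCast_zmod_val j]
  exact (key j.val).1

end AltCycle

section Sym2Image

variable {V W : Type*}

theorem suppOf_image_map (f : V → W) (E : Set (Sym2 V)) :
    suppOf (Sym2.map f '' E) = f '' suppOf E := by
  ext x
  constructor
  · rintro ⟨_, ⟨e, he, rfl⟩, hx⟩
    obtain ⟨a, ha, rfl⟩ := Sym2.mem_map.1 hx
    exact ⟨a, ⟨e, he, ha⟩, rfl⟩
  · rintro ⟨a, ⟨e, he, ha⟩, rfl⟩
    exact ⟨_, ⟨e, he, rfl⟩, Sym2.mem_map.2 ⟨a, ha, rfl⟩⟩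

theorem injective_image_image_map {f : V → W} (hf : Injective f) :
    Injective (image (image (Sym2.map f))) :=
  image_injective.2 (image_injective.2 (Sym2.map.injective hf))

end Sym2Image

namespace Setup

variable {V : Type*} {S : Setup V} {g : S.Γ ≃g S.Γ} {n : ℕ}

instance neZero_two_mul_r (S : Setup V) : NeZero (2 * S.r) := ⟨by have := S.r_pos; omega⟩

section Transport

theorem O_apply_iff (hg : g ∈ S.G) {u v : V} : S.O (g u) (g v) ↔ S.O u v :=
  ⟨fun h => by simpa using S.O_inv g⁻¹ (S.G.inv_mem hg) h, fun h => S.O_inv g hg h⟩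

def mapCycle (hg : g ∈ S.G) (c : AltCycle S.Γ S.O n) : AltCycle S.Γ S.O n where
  f i := g (c.f i)
  inj := g.injective.comp c.inj
  adj i := g.map_rel_iff.2 (c.adj i)
  alt i := by simpa only [O_apply_iff hg] using c.alt i

theorem cycEdges_mapCycle (hg : g ∈ S.G) (c : AltCycle S.Γ S.O n) :
    cycEdges (mapCycle hg c) = Sym2.map ⇑g '' cycEdges c := by
  rw [cycEdges, cycEdges, ← range_comp]
  rfl

theorem isAltEdgeSet_image (hg : g ∈ S.G) {E : Set (Sym2 V)} (hE : IsAltEdgeSet S.Γ S.O n E) :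
    IsAltEdgeSet S.Γ S.O n (Sym2.map ⇑g '' E) := by
  obtain ⟨c, rfl⟩ := hE
  exact ⟨mapCycle hg c, cycEdges_mapCycle hg c⟩

variable (S) in
def cyclesThru (v : V) : Set (Set (Sym2 V)) :=
  {E | IsAltEdgeSet S.Γ S.O (2 * S.r) E ∧ v ∈ suppOf E}

theorem image_mem_cyclesThru (hg : g ∈ S.G) {v : V} {E : Set (Sym2 V)}
    (hE : E ∈ S.cyclesThru v) : Sym2.map ⇑g '' E ∈ S.cyclesThru (g v) :=
  ⟨isAltEdgeSet_image hg hE.1, by rw [suppOf_image_map]; exact mem_image_of_mem _ hE.2⟩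

theorem cyclesThru_apply (hg : g ∈ S.G) (v : V) :
    S.cyclesThru (g v) = image (Sym2.map ⇑g) '' S.cyclesThru v := by
  refine Subset.antisymm (fun F hF => ⟨Sym2.map ⇑g⁻¹ '' F, ?_, ?_⟩)
    (image_subset_iff.2 fun E hE => image_mem_cyclesThru hg hE)
  · simpa using image_mem_cyclesThru (S.G.inv_mem hg) hF
  · simp [image_image, Sym2.map_map]

variable (S) in
def TailOn (E : Set (Sym2 V)) (w : V) : Prop := ∀ x, s(w, x) ∈ E → S.O w x

variable (S) in
def tailCycles (w : V) : Set (Set (Sym2 V)) := S.cyclesThru w ∩ {E | S.TailOn E w}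

theorem tailOn_image_iff (hg : g ∈ S.G) {E : Set (Sym2 V)} {w : V} :
    S.TailOn (Sym2.map ⇑g '' E) (g w) ↔ S.TailOn E w := by
  constructor
  · intro h x hx
    exact (O_apply_iff hg).1 (h (g x) ⟨_, hx, rfl⟩)
  · rintro h x ⟨e, he, hex⟩
    obtain ⟨y, rfl⟩ := g.surjective x
    obtain rfl : e = s(w, y) := Sym2.map.injective g.injective hex
    exact S.O_inv g hg (h y he)

theorem tailCycles_apply (hg : g ∈ S.G) (w : V) :
    S.tailCycles (g w) = image (Sym2.map ⇑g) '' S.tailCycles w := by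
  rw [tailCycles, tailCycles, cyclesThru_apply hg, ← image_inter_preimage]
  congr 2
  ext E
  exact tailOn_image_iff hg

end Transport

section Orientation

variable (c : AltCycle S.Γ S.O n) (q : ZMod n)

theorem O_sub_one_iff : S.O (c.f q) (c.f (q - 1)) ↔ S.O (c.f q) (c.f (q + 1)) := by
  have halt := c.alt (q - 1)
  have hadj := c.adj (q - 1)
  rw [sub_add_cancel, show q - 1 + 2 = q + 1 by ring] at halt
  rw [sub_add_cancel] at hadj
  rw [S.O_choice hadj.symm, S.O_choice (c.adj q), halt]

theorem O_add_one_iff :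
    S.O (c.f (q + 1)) (c.f (q + 1 + 1)) ↔ ¬ S.O (c.f q) (c.f (q + 1)) := by
  rw [← O_sub_one_iff, add_sub_cancel_right, S.O_choice (c.adj q).symm]

theorem O_add_two_iff : S.O (c.f (q + 2)) (c.f (q + 2 + 1)) ↔ S.O (c.f q) (c.f (q + 1)) := by
  rw [show q + 2 = q + 1 + 1 by ring, O_add_one_iff, O_add_one_iff, not_not]

theorem O_add_natCast_iff (m : ℕ) :
    S.O (c.f (q + m)) (c.f (q + m + 1)) ↔ (Even m ↔ S.O (c.f q) (c.f (q + 1))) := by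
  induction m with
  | zero => simp
  | succ m ih =>
    rw [Nat.cast_succ, ← add_assoc, O_add_one_iff, ih, Nat.even_add_one]
    tauto

theorem tailOn_cycEdges_iff : S.TailOn (cycEdges c) (c.f q) ↔ S.O (c.f q) (c.f (q + 1)) := by
  refine ⟨fun h => h _ ⟨q, rfl⟩, fun h x hx => ?_⟩
  rcases c.eq_add_one_or_eq_sub_one hx with rfl | rfl
  exacts [h, (O_sub_one_iff c q).2 h]

theorem O_of_not_tailOn_cycEdges (h : ¬ S.TailOn (cycEdges c) (c.f q)) {x : V}
    (hx : s(c.f q, x) ∈ cycEdges c) : S.O x (c.f q) := by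
  rw [tailOn_cycEdges_iff] at h
  have hadj := c.adj (q - 1)
  rw [sub_add_cancel] at hadj
  rcases c.eq_add_one_or_eq_sub_one hx with rfl | rfl
  · exact (S.O_choice (c.adj q).symm).2 h
  · exact (S.O_choice hadj).2 (mt (O_sub_one_iff c q).1 h)

end Orientation

section Transitivity

variable (S) in
theorem exists_O : ∃ u v, S.O u v := by
  obtain ⟨v⟩ := S.conn.nonempty
  obtain ⟨w, hw⟩ : (S.Γ.neighborSet v).Nonempty :=
    nonempty_of_ncard_ne_zero (by rw [S.tetra v]; norm_num)
  by_cases h : S.O v w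
  exacts [⟨v, w, h⟩, ⟨w, v, (S.O_choice hw.symm).2 h⟩]

theorem exists_O_to (w : V) : ∃ x, S.O x w := by
  obtain ⟨p, q, hpq⟩ := S.exists_O
  obtain ⟨g, hg, rfl⟩ := S.hat.1 q w
  exact ⟨g p, S.O_inv g hg hpq⟩

theorem exists_O_from (w : V) : ∃ x, S.O w x := by
  obtain ⟨p, q, hpq⟩ := S.exists_O
  obtain ⟨g, hg, rfl⟩ := S.hat.1 p w
  exact ⟨g q, S.O_inv g hg hpq⟩

theorem exists_map_edge {u v x y : V} (huv : S.Γ.Adj u v) (hxy : S.Γ.Adj x y) :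
    ∃ g ∈ S.G, Sym2.map ⇑g s(u, v) = s(x, y) := by
  obtain ⟨g, hg, h | h⟩ := S.hat.2.1 huv hxy
  · exact ⟨g, hg, by rw [Sym2.map_mk, h.1, h.2]⟩
  · exact ⟨g, hg, by rw [Sym2.map_mk, h.1, h.2, Sym2.eq_swap]⟩

theorem exists_map_arc {x y x' y' : V} (h : S.Γ.Adj x y) (h' : S.Γ.Adj x' y')
    (hO : S.O x y ↔ S.O x' y') : ∃ g ∈ S.G, g x = x' ∧ g y = y' := by
  by_cases hxy : S.O x y
  · exact S.O_orbit hxy (hO.1 hxy)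
  · obtain ⟨g, hg, h1, h2⟩ :=
      S.O_orbit ((S.O_choice h.symm).2 hxy) ((S.O_choice h'.symm).2 (mt hO.2 hxy))
    exact ⟨g, hg, h2, h1⟩

end Transitivity

section AlternatingCycles

theorem cycEdges_mem_cyclesThru (c : AltCycle S.Γ S.O (2 * S.r)) (i : ZMod (2 * S.r)) :
    cycEdges c ∈ S.cyclesThru (c.f i) :=
  ⟨⟨c, rfl⟩, c.mem_suppOf_cycEdges i⟩

variable (S) in
theorem ncard_cyclesThru (v : V) : (S.cyclesThru v).ncard = 2 := S.alt_cover v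

theorem cyclesThru_eq_pair {v : V} {E₁ E₂ : Set (Sym2 V)} (h₁₂ : E₁ ≠ E₂)
    (h₁ : E₁ ∈ S.cyclesThru v) (h₂ : E₂ ∈ S.cyclesThru v) : S.cyclesThru v = {E₁, E₂} := by
  have hcard := S.ncard_cyclesThru v
  refine (eq_of_subset_of_ncard_le (insert_subset h₁ (singleton_subset_iff.2 h₂)) ?_
    (finite_of_ncard_ne_zero (by rw [hcard]; norm_num))).symm
  rw [ncard_pair h₁₂]
  exact hcard.le

theorem exists_cyclesThru_eq_pair {v : V} {C : Set (Sym2 V)} (hC : C ∈ S.cyclesThru v) :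
    ∃ C', C ≠ C' ∧ S.cyclesThru v = {C, C'} := by
  obtain ⟨E₁, E₂, h₁₂, hv⟩ := ncard_eq_two.1 (S.ncard_cyclesThru v)
  rw [hv] at hC ⊢
  rcases hC with rfl | rfl
  exacts [⟨E₂, h₁₂, rfl⟩, ⟨E₁, h₁₂.symm, pair_comm _ _⟩]

theorem exists_isAltEdgeSet_mem {x y : V} (hxy : S.Γ.Adj x y) :
    ∃ E, IsAltEdgeSet S.Γ S.O (2 * S.r) E ∧ s(x, y) ∈ E := by
  obtain ⟨_, ⟨c, rfl⟩, -⟩ : (S.cyclesThru x).Nonempty :=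
    nonempty_of_ncard_ne_zero (by rw [S.ncard_cyclesThru x]; norm_num)
  obtain ⟨g, hg, hmap⟩ := S.exists_map_edge (c.adj 0) hxy
  exact ⟨_, isAltEdgeSet_image hg ⟨c, rfl⟩, _, ⟨0, rfl⟩, hmap⟩

theorem exists_adj_not_mem_cycEdges (c : AltCycle S.Γ S.O (2 * S.r)) (i : ZMod (2 * S.r)) :
    ∃ y, S.Γ.Adj (c.f i) y ∧ s(c.f i, y) ∉ cycEdges c := by
  by_contra! h
  have hsub : S.Γ.neighborSet (c.f i) ⊆ {c.f (i + 1), c.f (i - 1)} :=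
    fun y hy => c.eq_add_one_or_eq_sub_one (h y hy)
  have := (ncard_le_ncard hsub (toFinite _)).trans (ncard_insert_le _ _)
  rw [S.tetra, ncard_singleton] at this
  omega

theorem altEdgeSet_eq_of_mem_of_mem {E₁ E₂ : Set (Sym2 V)}
    (h₁ : IsAltEdgeSet S.Γ S.O (2 * S.r) E₁) (h₂ : IsAltEdgeSet S.Γ S.O (2 * S.r) E₂)
    {e : Sym2 V} (he₁ : e ∈ E₁) (he₂ : e ∈ E₂) : E₁ = E₂ := by
  by_contra hne
  obtain ⟨c, rfl⟩ := h₁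
  obtain ⟨i, rfl⟩ := he₁
  have hpair : S.cyclesThru (c.f i) = {cycEdges c, E₂} :=
    cyclesThru_eq_pair hne (cycEdges_mem_cyclesThru c i) ⟨h₂, _, he₂, Sym2.mem_mk_left _ _⟩
  -- move the common edge by `g ∈ G` onto an edge at `c.f i` off `c`: the images of `c` and `E₂`
  -- are again the two alternating cycles through `c.f i`, so one of them is `c`
  obtain ⟨y, hy, hyc⟩ := exists_adj_not_mem_cycEdges c i
  obtain ⟨g, hg, hmap⟩ := S.exists_map_edge (c.adj i) hy
  have hmem {E : Set (Sym2 V)} (hE : IsAltEdgeSet S.Γ S.O (2 * S.r) E)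
      (he : s(c.f i, c.f (i + 1)) ∈ E) : Sym2.map ⇑g '' E ∈ S.cyclesThru (c.f i) :=
    ⟨isAltEdgeSet_image hg hE, _, ⟨_, he, hmap⟩, Sym2.mem_mk_left _ _⟩
  have hne' : Sym2.map ⇑g '' cycEdges c ≠ Sym2.map ⇑g '' E₂ :=
    (image_injective.2 (Sym2.map.injective g.injective)).ne hne
  have := cyclesThru_eq_pair hne' (hmem ⟨c, rfl⟩ ⟨i, rfl⟩) (hmem h₂ he₂)
  rw [hpair] at this
  have hc : cycEdges c ∈ ({Sym2.map ⇑g '' cycEdges c, Sym2.map ⇑g '' E₂} : Set _) := by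
    rw [← this]
    exact mem_insert _ _
  rcases hc with hc | hc <;> rw [hc] at hyc
  exacts [hyc ⟨_, ⟨i, rfl⟩, hmap⟩, hyc ⟨_, he₂, hmap⟩]

end AlternatingCycles

section Tails

theorem O_of_not_tailOn {w x : V} {E : Set (Sym2 V)} (hE : E ∈ S.cyclesThru w)
    (h : ¬ S.TailOn E w) (hx : s(w, x) ∈ E) : S.O x w := by
  obtain ⟨⟨c, rfl⟩, hw⟩ := hE
  rw [c.suppOf_cycEdges] at hw
  obtain ⟨q, rfl⟩ := hw
  exact O_of_not_tailOn_cycEdges c q h hx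

theorem tailOn_iff_not_tailOn {w : V} {E₁ E₂ : Set (Sym2 V)} (h₁₂ : E₁ ≠ E₂)
    (h₁ : E₁ ∈ S.cyclesThru w) (h₂ : E₂ ∈ S.cyclesThru w) :
    S.TailOn E₁ w ↔ ¬ S.TailOn E₂ w := by
  have hcover {x : V} (hx : S.Γ.Adj w x) : s(w, x) ∈ E₁ ∨ s(w, x) ∈ E₂ := by
    obtain ⟨E, hE, hmem⟩ := exists_isAltEdgeSet_mem hx
    have : E ∈ S.cyclesThru w := ⟨hE, _, hmem, Sym2.mem_mk_left _ _⟩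
    rw [cyclesThru_eq_pair h₁₂ h₁ h₂] at this
    rcases this with rfl | rfl
    exacts [Or.inl hmem, Or.inr hmem]
  -- `w` is neither the tail nor the head of all four of its edges
  constructor
  · intro ht₁ ht₂
    obtain ⟨x, hx⟩ := exists_O_to w
    have hwx := (S.O_adj hx).symm
    refine (S.O_choice hwx).1 ?_ hx
    rcases hcover hwx with h | h
    exacts [ht₁ x h, ht₂ x h]
  · intro hn₂
    by_contra hn₁
    obtain ⟨x, hx⟩ := exists_O_from w
    refine (S.O_choice (S.O_adj hx)).1 hx ?_
    rcases hcover (S.O_adj hx) with h | h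
    exacts [O_of_not_tailOn h₁ hn₁ h, O_of_not_tailOn h₂ hn₂ h]

theorem tailCycles_eq_iff {v w : V} {C : Set (Sym2 V)} (hw : S.cyclesThru w = S.cyclesThru v)
    (hC : C ∈ S.cyclesThru v) :
    S.tailCycles w = S.tailCycles v ↔ (S.TailOn C w ↔ S.TailOn C v) := by
  obtain ⟨C', hCC', hpair⟩ := exists_cyclesThru_eq_pair hC
  have hC' : C' ∈ S.cyclesThru v := by rw [hpair]; exact mem_insert_of_mem _ rfl
  have hxw := tailOn_iff_not_tailOn hCC' (hw ▸ hC) (hw ▸ hC')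
  have hxv := tailOn_iff_not_tailOn hCC' hC hC'
  rw [tailCycles, tailCycles, hw, hpair, Set.ext_iff]
  constructor
  · intro h
    simpa using h C
  · intro h E
    simp only [mem_inter_iff, mem_insert_iff, mem_singleton_iff, mem_ofPred_eq]
    by_cases hEC : E = C
    · subst hEC
      tauto
    by_cases hEC' : E = C'
    · subst hEC'
      tauto
    · simp [hEC, hEC']

end Tails

section Symmetries

theorem apply_eq_of_apply_zero_of_apply_one (hg : g ∈ S.G) (c : AltCycle S.Γ S.O (2 * S.r))
    {k ε : ZMod (2 * S.r)} (hε : ε = 1 ∨ ε = -1) (h₀ : g (c.f 0) = c.f k)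
    (h₁ : g (c.f 1) = c.f (k + ε)) (j : ZMod (2 * S.r)) : g (c.f j) = c.f (k + ε * j) := by
  have hedge : s(c.f k, c.f (k + ε)) ∈ cycEdges c := by
    rcases hε with rfl | rfl
    · exact ⟨k, rfl⟩
    · exact ⟨k + -1, by simp only [neg_add_cancel_right, Sym2.eq_swap]⟩
  have hE : cycEdges (mapCycle hg c) = cycEdges c :=
    altEdgeSet_eq_of_mem_of_mem ⟨_, rfl⟩ ⟨c, rfl⟩ ⟨0, by simp [mapCycle, h₀, h₁]⟩ hedge
  exact c.apply_eq_of_cycEdges_subset hE.subset hε h₀ h₁ j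

theorem exists_rotation (c : AltCycle S.Γ S.O (2 * S.r)) :
    ∃ g ∈ S.G, ∀ j, g (c.f j) = c.f (j + 2) := by
  obtain ⟨g, hg, h₀, h₁⟩ :=
    S.exists_map_arc (c.adj 0) (c.adj (0 + 2)) (O_add_two_iff c 0).symm
  simp only [zero_add] at h₀ h₁
  refine ⟨g, hg, fun j => ?_⟩
  rw [apply_eq_of_apply_zero_of_apply_one hg c (Or.inl rfl) h₀ h₁, one_mul, add_comm]

theorem exists_reflection (c : AltCycle S.Γ S.O (2 * S.r)) :
    ∃ g ∈ S.G, ∀ j, g (c.f j) = c.f (-j) := by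
  have hadj := c.adj (0 - 1)
  rw [sub_add_cancel] at hadj
  obtain ⟨g, hg, h₀, h₁⟩ :=
    S.exists_map_arc (c.adj 0) hadj.symm (O_sub_one_iff c 0).symm
  rw [zero_add, zero_sub, ← zero_add (-1)] at h₁
  refine ⟨g, hg, fun j => ?_⟩
  rw [apply_eq_of_apply_zero_of_apply_one hg c (Or.inr rfl) h₀ h₁, zero_add, neg_one_mul]

end Symmetries

section Attachment

theorem setOf_cyclesThru_eq_eq_inter {v : V} {E₁ E₂ : Set (Sym2 V)} (h₁₂ : E₁ ≠ E₂)
    (h₁ : E₁ ∈ S.cyclesThru v) (h₂ : E₂ ∈ S.cyclesThru v) :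
    {w | S.cyclesThru w = S.cyclesThru v} = suppOf E₁ ∩ suppOf E₂ := by
  ext w
  rw [cyclesThru_eq_pair h₁₂ h₁ h₂]
  constructor
  · intro hw
    have hw₁ : E₁ ∈ S.cyclesThru w := by rw [hw]; exact mem_insert _ _
    have hw₂ : E₂ ∈ S.cyclesThru w := by rw [hw]; exact mem_insert_of_mem _ rfl
    exact ⟨hw₁.2, hw₂.2⟩
  · rintro ⟨hw₁, hw₂⟩
    exact cyclesThru_eq_pair h₁₂ ⟨h₁.1, hw₁⟩ ⟨h₂.1, hw₂⟩

variable (S) in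
theorem ncard_setOf_cyclesThru_eq (v : V) :
    {w | S.cyclesThru w = S.cyclesThru v}.ncard = S.att := by
  obtain ⟨E₁, E₂, h₁₂, hv⟩ := ncard_eq_two.1 (S.ncard_cyclesThru v)
  have h₁ : E₁ ∈ S.cyclesThru v := by rw [hv]; exact mem_insert _ _
  have h₂ : E₂ ∈ S.cyclesThru v := by rw [hv]; exact mem_insert_of_mem _ rfl
  rw [setOf_cyclesThru_eq_eq_inter h₁₂ h₁ h₂]
  obtain ⟨⟨c₁, rfl⟩, hv₁⟩ := h₁
  obtain ⟨⟨c₂, rfl⟩, hv₂⟩ := h₂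
  simp only [AltCycle.suppOf_cycEdges] at hv₁ hv₂ ⊢
  exact S.att_eq _ ⟨c₁, c₂, h₁₂, ⟨v, hv₁, hv₂⟩, rfl⟩

theorem mem_range_of_cyclesThru_eq (c : AltCycle S.Γ S.O (2 * S.r)) {i : ZMod (2 * S.r)}
    {w : V} (hw : S.cyclesThru w = S.cyclesThru (c.f i)) : w ∈ range c.f := by
  have := (hw ▸ cycEdges_mem_cyclesThru c i).2
  rwa [c.suppOf_cycEdges] at this

theorem cyclesThru_eq_iff_sub_mem {l : ℕ} (hl : S.att * l = 2 * S.r)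
    (c : AltCycle S.Γ S.O (2 * S.r)) (i q : ZMod (2 * S.r)) :
    S.cyclesThru (c.f q) = S.cyclesThru (c.f i) ↔
      q - i ∈ AddSubgroup.zmultiples (l : ZMod (2 * S.r)) := by
  obtain ⟨ρ, hρ, hrot⟩ := exists_rotation c
  obtain ⟨τ, hτ, hrefl⟩ := exists_reflection c
  refine ZMod.eq_iff_sub_mem_zmultiples (ψ := fun q => S.cyclesThru (c.f q)) ?_ ?_ hl ?_ q
  · intro x y
    simp only [← hrot, cyclesThru_apply hρ, (injective_image_image_map ρ.injective).eq_iff]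
  · intro x y
    simp only [← hrefl, cyclesThru_apply hτ, (injective_image_image_map τ.injective).eq_iff]
  · rw [← ncard_setOf_cyclesThru_eq S (c.f i), ← ncard_image_of_injective _ c.inj]
    congr 1
    ext w
    refine ⟨?_, fun hw => ?_⟩
    · rintro ⟨q, hq, rfl⟩
      exact hq
    · obtain ⟨q, rfl⟩ := mem_range_of_cyclesThru_eq c hw
      exact ⟨q, hw, rfl⟩

theorem cyclesThru_eq_iff {l : ℕ} (hl : S.att * l = 2 * S.r)
    (c : AltCycle S.Γ S.O (2 * S.r)) (i : ZMod (2 * S.r)) {w : V} :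
    S.cyclesThru w = S.cyclesThru (c.f i) ↔ ∃ j : ℕ, w = c.f (i + (l * j : ℕ)) := by
  constructor
  · intro hw
    obtain ⟨q, rfl⟩ := mem_range_of_cyclesThru_eq c hw
    obtain ⟨j, hj⟩ := ZMod.mem_zmultiples_natCast_iff.1 ((cyclesThru_eq_iff_sub_mem hl c i q).1 hw)
    exact ⟨j, by rw [← hj, add_sub_cancel]⟩
  · rintro ⟨j, rfl⟩
    exact (cyclesThru_eq_iff_sub_mem hl c i _).2
      (ZMod.mem_zmultiples_natCast_iff.2 ⟨j, add_sub_cancel_left _ _⟩)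

end Attachment

section Blocks

theorem blockSet_eq_setOf {s : ℕ} (h : 2 * S.r ∣ 2 * s * S.att) (c : AltCycle S.Γ S.O (2 * S.r))
    (i : ZMod (2 * S.r)) : S.blockSet s c i = {w | ∃ j : ℕ, w = c.f (i + (2 * s * j : ℕ))} := by
  ext w
  constructor
  · rintro ⟨j, -, rfl⟩
    exact ⟨j, rfl⟩
  · rintro ⟨j, rfl⟩
    refine ⟨j % S.att, Nat.mod_lt _ S.att_pos, congrArg (fun x => c.f (i + x)) ?_⟩
    have hzero : ((2 * s * S.att : ℕ) : ZMod (2 * S.r)) = 0 := (ZMod.natCast_eq_zero_iff _ _).2 h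
    push_cast at hzero ⊢
    conv_lhs => rw [← Nat.mod_add_div j S.att]
    push_cast
    linear_combination (j / S.att : ℕ) * hzero

theorem blockSet_eq_setOf_cyclesThru_eq {l s : ℕ} (hl : S.att * l = 2 * S.r) (h2s : 2 * s = l)
    (c : AltCycle S.Γ S.O (2 * S.r)) (i : ZMod (2 * S.r)) :
    S.blockSet s c i = {w | S.cyclesThru w = S.cyclesThru (c.f i)} := by
  rw [blockSet_eq_setOf (by rw [h2s, mul_comm l, hl]), h2s]
  ext w
  exact (cyclesThru_eq_iff hl c i).symm

theorem blockSet_eq_setOf_tailCycles_eq {l : ℕ} (hl : S.att * l = 2 * S.r) (hlo : Odd l)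
    (c : AltCycle S.Γ S.O (2 * S.r)) (i : ZMod (2 * S.r)) :
    S.blockSet l c i = {w | (S.cyclesThru w, S.tailCycles w) =
      (S.cyclesThru (c.f i), S.tailCycles (c.f i))} := by
  rw [blockSet_eq_setOf ⟨2, by rw [← hl]; ring⟩]
  ext w
  simp only [mem_ofPred_eq, Prod.mk.injEq]
  have htail (j : ℕ) :
      (S.TailOn (cycEdges c) (c.f (i + j)) ↔ S.TailOn (cycEdges c) (c.f i)) ↔ Even j := by
    rw [tailOn_cycEdges_iff, tailOn_cycEdges_iff, O_add_natCast_iff]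
    tauto
  constructor
  · rintro ⟨j, rfl⟩
    have hw : S.cyclesThru (c.f (i + (2 * l * j : ℕ))) = S.cyclesThru (c.f i) :=
      (cyclesThru_eq_iff hl c i).2 ⟨2 * j, by ring_nf⟩
    refine ⟨hw, (tailCycles_eq_iff hw (cycEdges_mem_cyclesThru c i)).2 ((htail _).2 ?_)⟩
    exact ⟨l * j, by ring⟩
  · rintro ⟨hw, htc⟩
    obtain ⟨j, rfl⟩ := (cyclesThru_eq_iff hl c i).1 hw
    rw [tailCycles_eq_iff hw (cycEdges_mem_cyclesThru c i), htail,
      Nat.even_mul, or_iff_right (Nat.not_even_iff_odd.2 hlo)] at htc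
    obtain ⟨k, rfl⟩ := htc
    exact ⟨k, by ring_nf⟩

end Blocks

end Setup

end HalfArc

/-- the set `B_s(C; u)` of Construction 5.3 is a block of
imprimitivity for the action of `G` on the vertex set of `Γ`. -/
theorem statement_9 {V : Type*} (S : Setup V) (l s : ℕ) (hl : S.att * l = 2 * S.r)
    (hs : s = if Even l then l / 2 else l)
    (c : AltCycle S.Γ S.O (2 * S.r)) (i : ZMod (2 * S.r)) :
    ∀ g ∈ S.G, (g : V → V) '' S.blockSet s c i = S.blockSet s c i ∨
      Disjoint ((g : V → V) '' S.blockSet s c i) (S.blockSet s c i) := by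
  intro g hg
  have hσ := injective_image_image_map g.injective
  rcases Nat.even_or_odd l with hle | hlo
  · have h2s : 2 * s = l := by rw [hs, if_pos hle, Nat.two_mul_div_two_of_even hle]
    rw [Setup.blockSet_eq_setOf_cyclesThru_eq hl h2s]
    exact image_fiber_eq_or_disjoint g.surjective hσ (Setup.cyclesThru_apply hg) _
  · obtain rfl : s = l := by rw [hs, if_neg (Nat.not_even_iff_odd.2 hlo)]
    rw [Setup.blockSet_eq_setOf_tailCycles_eq hl hlo]
    exact image_fiber_eq_or_disjoint g.surjective (hσ.prodMap hσ)
      (fun w => Prod.ext (Setup.cyclesThru_apply hg w) (Setup.tailCycles_apply hg w)) _
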